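/- If (x̂, ŵ) is feasible for the relaxed problem (with moment matrix constraint M_{d₁}[ŵ] ⪰ 0, ŵ₀ = 1, ⟨uᵢ, ŵ⟩ ≥ 0 and x̂ = π(ŵ)), and each −uᵢ is SOS-convex, then uᵢ(x̂) ≥ 0 for every i; i.e., x̂ belongs to X = {x : u₁(x) ≥ 0, …, u_{m₁}(x) ≥ 0}. -/

import Mathlib

/-!
Let `L = Riesz w` and `a = π(w)`. For `f` SOS-convex of degree at most `2d`, the real
polynomial `Q(t) = L(f(a + t (x - a)))` has `Q(0) = f(a)`, `Q(1) = L(f)` and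
`Q'(0) = ∑ᵢ ∂ᵢf(a) L(xᵢ - aᵢ) = 0`. Writing the Hessian as `VᵀV` gives `Q''(t) = ∑ₖ L(rₖ(t)²)`
with `rₖ(t) = ∑ᵢ (xᵢ - aᵢ) Vₖᵢ(a + t (x - a))`; the leading forms of a sum of squares cannot
cancel, so `deg Vₖᵢ ≤ d - 1`, `deg rₖ(t) ≤ d`, and the moment matrix condition makes `Q'' ≥ 0`.
Convexity of `Q` then gives `L(f) ≥ f(a)`, and for `f = -uᵢ` this reads `uᵢ(a) ≥ L(uᵢ) ≥ 0`.
-/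

open MvPolynomial

/-- The Riesz functional of a truncated multi-sequence `w` applied to a polynomial. -/
noncomputable def Riesz {n : ℕ} (w : (Fin n →₀ ℕ) → ℝ) (p : MvPolynomial (Fin n) ℝ) : ℝ :=
  ∑ α ∈ p.support, coeff α p * w α

/-- A polynomial is SOS-convex if its Hessian equals `V(x)ᵀ V(x)` for a polynomial matrix `V`. -/
def IsSOSConvex {n : ℕ} (f : MvPolynomial (Fin n) ℝ) : Prop :=
  ∃ (k : ℕ) (V : Fin k → Fin n → MvPolynomial (Fin n) ℝ),
    ∀ i j, pderiv i (pderiv j f) = ∑ t, V t i * V t j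

section Riesz

variable {n : ℕ} (w : (Fin n →₀ ℕ) → ℝ)

theorem riesz_eq_sum_of_support_subset {p : MvPolynomial (Fin n) ℝ}
    {s : Finset (Fin n →₀ ℕ)} (h : p.support ⊆ s) : Riesz w p = ∑ α ∈ s, coeff α p * w α :=
  Finset.sum_subset h fun α _ hα => by rw [notMem_support_iff.mp hα, zero_mul]

noncomputable def rieszₗ : MvPolynomial (Fin n) ℝ →ₗ[ℝ] ℝ where
  toFun := Riesz w
  map_add' p q := by
    classical
    rw [riesz_eq_sum_of_support_subset w (support_add (p := p) (q := q)),
      riesz_eq_sum_of_support_subset w (Finset.subset_union_left (s₂ := q.support)),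
      riesz_eq_sum_of_support_subset w (Finset.subset_union_right (s₁ := p.support)),
      ← Finset.sum_add_distrib]
    simp only [coeff_add, add_mul]
  map_smul' c p := by
    rw [riesz_eq_sum_of_support_subset w support_smul, Riesz, RingHom.id_apply, smul_eq_mul,
      Finset.mul_sum]
    simp only [coeff_smul, smul_eq_mul, mul_assoc]

@[simp]
theorem rieszₗ_apply (p : MvPolynomial (Fin n) ℝ) : rieszₗ w p = Riesz w p := rfl

theorem riesz_C (c : ℝ) : Riesz w (C c) = c * w 0 := by
  rcases eq_or_ne c 0 with rfl | hc
  · simp [Riesz]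
  · simp [Riesz, support_C, hc]

theorem riesz_X (i : Fin n) : Riesz w (X i) = w (Finsupp.single i 1) := by
  simp [Riesz, support_X]

end Riesz

section Degree

variable {σ R : Type*}

theorem totalDegree_pderiv_le [CommSemiring R] (p : MvPolynomial σ R) (i : σ) :
    (pderiv i p).totalDegree ≤ p.totalDegree - 1 := by
  classical
  refine Finset.sup_le fun m hm => ?_
  rw [mem_support_iff, coeff_pderiv] at hm
  have hmi : m + Finsupp.single i 1 ∈ p.support := mem_support_iff.mpr (left_ne_zero_of_mul hm)
  have := le_totalDegree hmi
  rw [Finsupp.sum_add_index' (fun _ => rfl) (fun _ _ _ => rfl), Finsupp.sum_single_index rfl]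
    at this
  omega

theorem totalDegree_aeval_le [CommSemiring R] {τ : Type*} (g : σ → MvPolynomial τ R)
    (hg : ∀ i, (g i).totalDegree ≤ 1) (p : MvPolynomial σ R) :
    (aeval g p).totalDegree ≤ p.totalDegree := by
  classical
  conv_lhs => rw [p.as_sum, map_sum]
  refine totalDegree_finsetSum_le fun s hs => ?_
  rw [aeval_monomial, ← C_eq_algebraMap]
  refine (totalDegree_mul _ _).trans ?_
  rw [totalDegree_C, zero_add]
  refine (totalDegree_finsetProd _ _).trans <|
    (Finset.sum_le_sum fun i _ => ?_).trans (le_totalDegree hs)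
  exact (totalDegree_pow _ _).trans ((Nat.mul_le_mul_left _ (hg i)).trans_eq (mul_one _))

open MonomialOrder in
theorem two_mul_totalDegree_le_totalDegree_sum_mul_self [LinearOrder σ] [WellFoundedGT σ]
    [CommRing R] [LinearOrder R] [IsStrictOrderedRing R] {ι : Type*} [Fintype ι]
    (p : ι → MvPolynomial σ R) (k : ι) :
    2 * (p k).totalDegree ≤ (∑ t, p t * p t).totalDegree := by
  obtain ⟨t₀, -, ht₀⟩ := Finset.exists_max_image Finset.univ
    (fun t => degLex.toSyn (degLex.degree (p t))) ⟨k, Finset.mem_univ k⟩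
  replace ht₀ (t : ι) := ht₀ t (Finset.mem_univ t)
  set e := degLex.degree (p t₀)
  have hk : (p k).totalDegree ≤ (p t₀).totalDegree :=
    degLex_totalDegree_monotone (ht₀ k)
  suffices 2 * (p t₀).totalDegree ≤ (∑ t, p t * p t).totalDegree by omega
  -- the coefficient of `xᵉ⁺ᵉ` is a sum of squares of leading coefficients, hence positive
  rcases eq_or_ne (p t₀) 0 with h0 | h0
  · simp [h0]
  have hcoeff : coeff (e + e) (∑ t, p t * p t) = ∑ t, coeff e (p t) * coeff e (p t) := by
    rw [coeff_sum]
    exact Finset.sum_congr rfl fun t _ =>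
      degLex.coeff_mul_of_add_of_degree_le (ht₀ t) (ht₀ t)
  have hpos : 0 < coeff (e + e) (∑ t, p t * p t) := by
    rw [hcoeff]
    refine Finset.sum_pos' (fun t _ => mul_self_nonneg _) ⟨t₀, Finset.mem_univ _, ?_⟩
    exact mul_self_pos.mpr (degLex.coeff_degree_ne_zero_iff.mpr h0)
  have := le_totalDegree (mem_support_iff.mpr hpos.ne')
  rw [← degree_degLexDegree, two_mul, ← map_add]
  exact this

theorem two_mul_totalDegree_le_of_pderiv_pderiv_eq [LinearOrder σ] [WellFoundedGT σ]
    [CommRing R] [LinearOrder R] [IsStrictOrderedRing R] {ι : Type*} [Fintype ι]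
    {f : MvPolynomial σ R} {V : ι → σ → MvPolynomial σ R}
    (hV : ∀ i j, pderiv i (pderiv j f) = ∑ t, V t i * V t j) (k : ι) (i : σ) :
    2 * (V k i).totalDegree ≤ f.totalDegree - 2 := by
  have hsos := two_mul_totalDegree_le_totalDegree_sum_mul_self (fun t => V t i) k
  rw [← hV i i] at hsos
  have := totalDegree_pderiv_le (pderiv i f) i
  have := totalDegree_pderiv_le f i
  omega

end Degree

open scoped Polynomial

section PolynomialCalculus

variable {σ R S : Type*} [CommSemiring R] [CommSemiring S] [Algebra R S]

theorem derivative_aeval_mvPolynomial [Fintype σ] (g : σ → S[X]) (f : MvPolynomial σ R) :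
    Polynomial.derivative (aeval g f) =
      ∑ i, aeval g (pderiv i f) * Polynomial.derivative (g i) := by
  classical
  induction f using MvPolynomial.induction_on with
  | C c => simp
  | add p q hp hq => simp [hp, hq, add_mul, Finset.sum_add_distrib]
  | mul_X p j hp =>
    simp only [map_mul, aeval_X, Polynomial.derivative_mul, hp, Finset.sum_mul,
      Derivation.leibniz, pderiv_X, Pi.single_apply, smul_eq_mul, mul_ite, mul_one, mul_zero,
      map_add, apply_ite (aeval g), map_zero, add_mul, ite_mul, zero_mul, Finset.sum_add_distrib,
      Finset.sum_ite_eq, Finset.mem_univ, ↓reduceIte]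
    rw [add_comm]
    congr 1
    exact Finset.sum_congr rfl fun i _ => by ring

theorem eval_aeval_mvPolynomial (g : σ → S[X]) (x : S) (f : MvPolynomial σ R) :
    (aeval g f).eval x = aeval (fun i => (g i).eval x) f := by
  induction f using MvPolynomial.induction_on with
  | C c => simp
  | add p q hp hq => simp [hp, hq]
  | mul_X p j hp => simp [hp]

end PolynomialCalculus

namespace Polynomial

variable {K A : Type*} [CommSemiring K] [Semiring A] [Algebra K A] (L : A →ₗ[K] K)

noncomputable def mapLinear (P : A[X]) : K[X] :=
  ⟨.ofCoeff (P.toFinsupp.coeff.mapRange L L.map_zero)⟩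

@[simp]
theorem coeff_mapLinear (P : A[X]) (k : ℕ) : (P.mapLinear L).coeff k = L (P.coeff k) := by
  rcases P with ⟨P⟩
  simp [mapLinear, Polynomial.coeff]

theorem derivative_mapLinear (P : A[X]) :
    derivative (P.mapLinear L) = (derivative P).mapLinear L := by
  ext k
  rw [coeff_derivative, coeff_mapLinear, coeff_mapLinear, coeff_derivative,
    show ((k : A) + 1) = algebraMap K A (k + 1) by simp, ← Algebra.commutes, ← Algebra.smul_def,
    map_smul, smul_eq_mul, mul_comm]

theorem eval_mapLinear (P : A[X]) (t : K) :
    (P.mapLinear L).eval t = L (P.eval (algebraMap K A t)) := by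
  have hdeg : (P.mapLinear L).natDegree < P.natDegree + 1 :=
    Nat.lt_succ_of_le <| natDegree_le_iff_coeff_eq_zero.mpr fun k hk => by
      rw [coeff_mapLinear, coeff_eq_zero_of_natDegree_lt hk, map_zero]
  rw [eval_eq_sum_range' hdeg, eval_eq_sum_range, map_sum]
  refine Finset.sum_congr rfl fun k _ => ?_
  rw [coeff_mapLinear, ← map_pow, ← Algebra.commutes, ← Algebra.smul_def, map_smul,
    smul_eq_mul, mul_comm]

end Polynomial

theorem Polynomial.derivative_eval_le_slope (Q : ℝ[X])
    (hQ : ∀ t, 0 ≤ Q.derivative.derivative.eval t) {x y : ℝ} (hxy : x < y) :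
    Q.derivative.eval x ≤ slope (fun t => Q.eval t) x y := by
  have hderiv (P : ℝ[X]) : deriv (fun t => P.eval t) = fun t => P.derivative.eval t :=
    _root_.funext fun _ => P.deriv
  have hconvex : ConvexOn ℝ Set.univ fun t => Q.eval t :=
    convexOn_univ_of_deriv2_nonneg Q.differentiable
      (by simpa [hderiv] using Q.derivative.differentiable) (by simpa [hderiv] using hQ)
  simpa [hderiv] using
    hconvex.deriv_le_slope (Set.mem_univ x) (Set.mem_univ y) hxy (Q.differentiable x)

section Line

variable {σ R : Type*} [CommRing R] (a : σ → R)

noncomputable def lineFrom (i : σ) : (MvPolynomial σ R)[X] :=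
  Polynomial.C (X i - C (a i)) * Polynomial.X + Polynomial.C (C (a i))

theorem eval_one_aeval_lineFrom (f : MvPolynomial σ R) : (aeval (lineFrom a) f).eval 1 = f := by
  simp [eval_aeval_mvPolynomial, lineFrom]

theorem eval_zero_aeval_lineFrom (f : MvPolynomial σ R) :
    (aeval (lineFrom a) f).eval 0 = C (eval a f) := by
  have hline : (fun i => (lineFrom a i).eval 0) = C ∘ a := by
    ext1 i
    simp [lineFrom]
  rw [eval_aeval_mvPolynomial, hline, aeval_C_comp_left, aeval_eq_eval]

theorem derivative_aeval_lineFrom [Fintype σ] (f : MvPolynomial σ R) :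
    (aeval (lineFrom a) f).derivative =
      ∑ i, aeval (lineFrom a) (pderiv i f) * Polynomial.C (X i - C (a i)) := by
  simp [derivative_aeval_mvPolynomial, lineFrom]

theorem totalDegree_X_sub_C_le (i : σ) (r : R) :
    (X i - C r : MvPolynomial σ R).totalDegree ≤ 1 :=
  (totalDegree_sub_C_le _ _).trans <|
    (totalDegree_monomial_le (Finsupp.single i 1) (1 : R)).trans_eq (by simp)

theorem totalDegree_eval_lineFrom_le (i : σ) (t : R) :
    ((lineFrom a i).eval (C t)).totalDegree ≤ 1 := by
  simp only [lineFrom, Polynomial.eval_add, Polynomial.eval_mul, Polynomial.eval_C,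
    Polynomial.eval_X]
  refine (totalDegree_add _ _).trans (max_le ?_ ((totalDegree_C _).trans_le zero_le_one))
  refine (totalDegree_mul _ _).trans ?_
  rw [totalDegree_C, add_zero]
  exact totalDegree_X_sub_C_le i (a i)

theorem eval_derivative_derivative_aeval_lineFrom [Fintype σ] (f : MvPolynomial σ R)
    (x : MvPolynomial σ R) :
    (aeval (lineFrom a) f).derivative.derivative.eval x =
      ∑ i, ∑ j, aeval (fun k => (lineFrom a k).eval x) (pderiv j (pderiv i f)) *
        (X j - C (a j)) * (X i - C (a i)) := by
  simp [derivative_aeval_lineFrom, Polynomial.derivative_mul, Polynomial.eval_finsetSum,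
    Finset.sum_mul, eval_aeval_mvPolynomial]

theorem sum_sum_aeval_pderiv_pderiv_eq_sum_mul_self {τ : Type*} [Fintype σ] {k : ℕ}
    {f : MvPolynomial σ R} {V : Fin k → σ → MvPolynomial σ R}
    (hV : ∀ i j, pderiv i (pderiv j f) = ∑ t, V t i * V t j)
    (g c : σ → MvPolynomial τ R) :
    ∑ i, ∑ j, aeval g (pderiv j (pderiv i f)) * c j * c i =
      ∑ t, (∑ i, c i * aeval g (V t i)) * (∑ i, c i * aeval g (V t i)) := by
  simp only [hV, map_sum, map_mul, Finset.sum_mul, Finset.mul_sum]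
  refine (Finset.sum_congr rfl fun i _ => Finset.sum_comm).trans (Finset.sum_comm.trans ?_)
  exact Finset.sum_congr rfl fun t _ => Finset.sum_congr rfl fun i _ =>
    Finset.sum_congr rfl fun j _ => by ring

end Line

section Jensen

variable {n : ℕ} {w : (Fin n →₀ ℕ) → ℝ}

theorem riesz_X_sub_C_moment (hw0 : w 0 = 1) (i : Fin n) :
    Riesz w (X i - C (w (Finsupp.single i 1))) = 0 := by
  rw [← rieszₗ_apply, map_sub, rieszₗ_apply, rieszₗ_apply, riesz_X, riesz_C, hw0, mul_one,
    sub_self]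

theorem eval_moments_le_riesz_of_isSOSConvex {d : ℕ} (hw0 : w 0 = 1)
    (hpsd : ∀ p : MvPolynomial (Fin n) ℝ, p.totalDegree ≤ d → 0 ≤ Riesz w (p * p))
    {f : MvPolynomial (Fin n) ℝ} (hf : IsSOSConvex f) (hdeg : f.totalDegree ≤ 2 * d) :
    eval (fun i => w (Finsupp.single i 1)) f ≤ Riesz w f := by
  obtain ⟨K, V, hV⟩ := hf
  rcases Nat.eq_zero_or_pos d with rfl | hd
  · rw [totalDegree_eq_zero_iff_eq_C.mp (Nat.le_zero.mp hdeg), eval_C, riesz_C, hw0, mul_one]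
  set a : Fin n → ℝ := fun i => w (Finsupp.single i 1)
  set Q := (aeval (lineFrom a) f).mapLinear (rieszₗ w)
  have hQ1 : Q.eval 1 = Riesz w f := by
    rw [Polynomial.eval_mapLinear, map_one, eval_one_aeval_lineFrom, rieszₗ_apply]
  have hQ0 : Q.eval 0 = eval a f := by
    rw [Polynomial.eval_mapLinear, map_zero, eval_zero_aeval_lineFrom, rieszₗ_apply, riesz_C, hw0,
      mul_one]
  have hQ'0 : Q.derivative.eval 0 = 0 := by
    rw [Polynomial.derivative_mapLinear, Polynomial.eval_mapLinear, derivative_aeval_lineFrom,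
      map_zero, Polynomial.eval_finsetSum, map_sum]
    refine Finset.sum_eq_zero fun i _ => ?_
    rw [Polynomial.eval_mul, Polynomial.eval_C, eval_zero_aeval_lineFrom, ← smul_eq_C_mul,
      map_smul, rieszₗ_apply, riesz_X_sub_C_moment hw0, smul_zero]
  have hQ'' (t : ℝ) : 0 ≤ Q.derivative.derivative.eval t := by
    set g := fun k => (lineFrom a k).eval (C t)
    set r : Fin K → MvPolynomial (Fin n) ℝ := fun k => ∑ i, (X i - C (a i)) * aeval g (V k i)
    have hr (k : Fin K) : (r k).totalDegree ≤ d := by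
      refine totalDegree_finsetSum_le fun i _ => (totalDegree_mul _ _).trans ?_
      have := totalDegree_X_sub_C_le i (a i)
      have := totalDegree_aeval_le g (fun j => totalDegree_eval_lineFrom_le a j t) (V k i)
      have := two_mul_totalDegree_le_of_pderiv_pderiv_eq hV k i
      omega
    rw [Polynomial.derivative_mapLinear, Polynomial.derivative_mapLinear,
      Polynomial.eval_mapLinear, algebraMap_eq, eval_derivative_derivative_aeval_lineFrom,
      sum_sum_aeval_pderiv_pderiv_eq_sum_mul_self hV, map_sum]
    exact Finset.sum_nonneg fun k _ => hpsd _ (hr k)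
  have := Q.derivative_eval_le_slope hQ'' zero_lt_one
  rw [hQ'0, slope_def_field, hQ1, hQ0] at this
  linarith

end Jensen

theorem stmt13 {n d₁ m₁ : ℕ} (u : Fin m₁ → MvPolynomial (Fin n) ℝ)
    (hu : ∀ i, IsSOSConvex (-(u i)))
    (hdeg : ∀ i, (u i).totalDegree ≤ 2 * d₁)
    (w : (Fin n →₀ ℕ) → ℝ) (hw0 : w 0 = 1)
    (hpsd : ∀ p : MvPolynomial (Fin n) ℝ, p.totalDegree ≤ d₁ → 0 ≤ Riesz w (p * p))
    (hwu : ∀ i, 0 ≤ Riesz w (u i))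
    (xhat : Fin n → ℝ) (hx : xhat = fun i => w (Finsupp.single i 1)) :
    ∀ i, 0 ≤ eval xhat (u i) := by
  intro i
  have hjensen := eval_moments_le_riesz_of_isSOSConvex hw0 hpsd (hu i)
    ((totalDegree_neg (u i)).trans_le (hdeg i))
  rw [← hx, map_neg, ← rieszₗ_apply, map_neg, rieszₗ_apply] at hjensen
  linarith [hwu i]
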